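/- Let d ≥ 1 and let μ be the normalized Haar measure on the compact group O(d) of real orthogonal d×d matrices. For every d²×d² complex matrix M there exist complex coefficients α, β, γ such that ∫ (O ⊗ O) · M · (O ⊗ O)ᵀ dμ(O) = α·1 + β·S + γ·E, where S is the swap matrix (S((i,j),(k,l)) = 1 iff i = l and j = k) and E is the matrix with E((i,j),(k,l)) = 1 iff i = j and k = l. -/

import Mathlib

open Matrix Kronecker MeasureTheory

attribute [local instance] Matrix.normedAddCommGroup Matrix.normedSpace

/-- The swap matrix `S((i,j),(k,l)) = 1` iff `i = l ∧ j = k`. -/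
def swapMat (d : ℕ) : Matrix (Fin d × Fin d) (Fin d × Fin d) ℂ :=
  Matrix.of fun p q => if p.1 = q.2 ∧ p.2 = q.1 then 1 else 0

/-- The matrix `E((i,j),(k,l)) = 1` iff `i = j ∧ k = l`. -/
def eMat (d : ℕ) : Matrix (Fin d × Fin d) (Fin d × Fin d) ℂ :=
  Matrix.of fun p q => if p.1 = p.2 ∧ q.1 = q.2 then 1 else 0

/-- The embedding of a real orthogonal matrix into complex matrices. -/
def embedC {d : ℕ} (O : Matrix.orthogonalGroup (Fin d) ℝ) :
    Matrix (Fin d) (Fin d) ℂ :=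
  (O : Matrix (Fin d) (Fin d) ℝ).map Complex.ofReal

/-!
Left invariance of `μ` makes the twirl `T = ∫ (O ⊗ O) M (O ⊗ O)ᵀ dμ` invariant under
conjugation by `U ⊗ U` for every orthogonal `U` (if the integrand is not integrable, `T = 0`).
Conjugating by diagonal sign matrices kills every entry `T((i,j),(k,l))` whose indices do not pair
up as `i = k, j = l` or `i = l, j = k` or `i = j, k = l`. Conjugating by permutation matrices shows
that the surviving entries only depend on the pairing type: `a`, `b`, `c` when `i ≠ j`, and `t` on
`i = j = k = l`. Finally a reflection mixing two coordinates forces `t = a + b + c`, which says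
exactly that `T = a • 1 + b • S + c • E`.
-/

theorem ContinuousLinearMap.map_integral_eq_of_comp_mul_left {G 𝕜 E : Type*} [Group G]
    [MeasurableSpace G] [MeasurableMul G] {μ : Measure G} [μ.IsMulLeftInvariant] [RCLike 𝕜]
    [NormedAddCommGroup E] [NormedSpace 𝕜 E] [NormedSpace ℝ E] [CompleteSpace E]
    (L : E →L[𝕜] E) {f : G → E} {g : G} (hf : ∀ x, f (g * x) = L (f x)) :
    L (∫ x, f x ∂μ) = ∫ x, f x ∂μ := by
  by_cases hint : Integrable f μ
  · rw [← L.integral_comp_comm hint, ← integral_mul_left_eq_self f g]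
    simp_rw [hf]
  · simp [integral_undef hint]

lemma Equiv.Perm.exists_apply_eq_and_apply_eq {α : Type*} [DecidableEq α] {a b x y : α}
    (hab : a ≠ b) (hxy : x ≠ y) : ∃ σ : Equiv.Perm α, σ a = x ∧ σ b = y := by
  refine ⟨Equiv.swap a x * Equiv.swap b (Equiv.swap a x y), ?_, ?_⟩
  · have hay : a ≠ Equiv.swap a x y := by
      rw [Ne, eq_comm, Equiv.swap_apply_eq_iff, Equiv.swap_apply_left]
      exact hxy.symm
    simp [Equiv.swap_apply_of_ne_of_ne hab hay]
  · simp

lemma pairs_up_of_sign_prod_eq_one {α R : Type*} [DecidableEq α] [CommRing R] [CharZero R]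
    {i j k l : α}
    (h : ∀ m, (if i = m then (-1 : R) else 1) * (if j = m then -1 else 1) *
      ((if k = m then -1 else 1) * (if l = m then -1 else 1)) = 1) :
    (i = k ∧ j = l) ∨ (i = l ∧ j = k) ∨ (i = j ∧ k = l) := by
  -- Every value occurs an even number of times among `i, j, k, l`; testing `m = i, j, k` suffices.
  have hi := h i
  have hj := h j
  have hk := h k
  grind

section OrthogonalGroup

variable {n R : Type*} [DecidableEq n]

lemma kronecker_permMatrix [MulZeroOneClass R] (σ : Equiv.Perm n) :
    σ.permMatrix R ⊗ₖ σ.permMatrix R = Equiv.Perm.permMatrix R (σ.prodCongr σ) := by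
  ext p q
  simp only [kroneckerMap_apply, PEquiv.toMatrix_toPEquiv_apply, Pi.single_apply, Prod.ext_iff]
  split_ifs <;> simp_all

variable [Fintype n] [CommRing R]

lemma diagonal_mem_orthogonalGroup {v : n → R} (hv : v * v = 1) :
    diagonal v ∈ orthogonalGroup n R := by
  rw [mem_orthogonalGroup_iff, diagonal_transpose, diagonal_mul_diagonal, ← Pi.mul_def, hv]
  exact diagonal_one

lemma permMatrix_mem_orthogonalGroup (σ : Equiv.Perm n) :
    σ.permMatrix R ∈ orthogonalGroup n R := by
  rw [mem_orthogonalGroup_iff, transpose_permMatrix, ← permMatrix_mul, inv_mul_cancel,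
    permMatrix_one]

lemma one_sub_smul_vecMulVec_mem_orthogonalGroup {v : n → R} {k : R} (h : k * (v ⬝ᵥ v) = 2) :
    1 - k • vecMulVec v v ∈ orthogonalGroup n R := by
  have hsq : vecMulVec v v * vecMulVec v v = (v ⬝ᵥ v) • vecMulVec v v := by
    rw [vecMulVec_mul_vecMulVec, vecMulVec_smul]
  simp only [mem_orthogonalGroup_iff, transpose_sub, transpose_one, transpose_smul,
    transpose_vecMulVec, sub_mul, mul_sub, Matrix.mul_smul, Matrix.smul_mul, Matrix.one_mul,
    Matrix.mul_one, hsq, smul_smul, h]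
  module

end OrthogonalGroup

section Twirl

variable {d : ℕ}

noncomputable def kronConj (O : orthogonalGroup (Fin d) ℝ)
    (M : Matrix (Fin d × Fin d) (Fin d × Fin d) ℂ) : Matrix (Fin d × Fin d) (Fin d × Fin d) ℂ :=
  (embedC O ⊗ₖ embedC O) * M * (embedC O ⊗ₖ embedC O)ᵀ

lemma embedC_mul (O O' : orthogonalGroup (Fin d) ℝ) :
    embedC (O * O') = embedC O * embedC O' :=
  Matrix.map_mul (f := Complex.ofRealHom)

lemma kronConj_mul (U O : orthogonalGroup (Fin d) ℝ)
    (M : Matrix (Fin d × Fin d) (Fin d × Fin d) ℂ) :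
    kronConj (U * O) M = kronConj U (kronConj O M) := by
  simp only [kronConj, embedC_mul, mul_kronecker_mul, transpose_mul, Matrix.mul_assoc]

theorem kronConj_integral [MeasurableSpace (orthogonalGroup (Fin d) ℝ)]
    [BorelSpace (orthogonalGroup (Fin d) ℝ)] (μ : Measure (orthogonalGroup (Fin d) ℝ))
    [μ.IsMulLeftInvariant] (M : Matrix (Fin d × Fin d) (Fin d × Fin d) ℂ)
    (U : orthogonalGroup (Fin d) ℝ) :
    kronConj U (∫ O, kronConj O M ∂μ) = ∫ O, kronConj O M ∂μ := by
  set K := embedC U ⊗ₖ embedC U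
  let L := LinearMap.toContinuousLinearMap (LinearMap.mulRight ℂ Kᵀ ∘ₗ LinearMap.mulLeft ℂ K)
  exact L.map_integral_eq_of_comp_mul_left (g := U) fun O => kronConj_mul U O M

lemma kronConj_apply (O : orthogonalGroup (Fin d) ℝ)
    (A : Matrix (Fin d × Fin d) (Fin d × Fin d) ℂ) (p q : Fin d × Fin d) :
    kronConj O A p q = ∑ r : Fin d × Fin d, ∑ s : Fin d × Fin d,
      (O p.1 r.1 * O p.2 r.2 : ℂ) * A r s * (O q.1 s.1 * O q.2 s.2 : ℂ) := by
  simp only [kronConj, mul_apply, kroneckerMap_apply, transpose_apply, embedC, map_apply,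
    Finset.sum_mul]
  exact Finset.sum_comm

end Twirl

section Commutant

variable {d : ℕ} {A : Matrix (Fin d × Fin d) (Fin d × Fin d) ℂ}

def signFlip (m : Fin d) : orthogonalGroup (Fin d) ℝ :=
  ⟨diagonal fun x => if x = m then -1 else 1,
    diagonal_mem_orthogonalGroup (funext fun x => by by_cases x = m <;> simp [*])⟩

lemma kronConj_signFlip_apply (m : Fin d) (p q : Fin d × Fin d) :
    kronConj (signFlip m) A p q =
      (if p.1 = m then -1 else 1) * (if p.2 = m then -1 else 1) * A p q *
        ((if q.1 = m then -1 else 1) * (if q.2 = m then -1 else 1)) := by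
  simp [kronConj, signFlip, embedC, diagonal_map, diagonal_kronecker_diagonal, diagonal_mul,
    mul_diagonal, apply_ite Complex.ofReal]

lemma apply_eq_zero_of_kronConj_signFlip (hA : ∀ m, kronConj (signFlip m) A = A)
    {i j k l : Fin d} (h : ¬((i = k ∧ j = l) ∨ (i = l ∧ j = k) ∨ (i = j ∧ k = l))) :
    A (i, j) (k, l) = 0 := by
  by_contra hne
  refine h (pairs_up_of_sign_prod_eq_one (R := ℂ) fun m => mul_right_cancel₀ hne ?_)
  have := kronConj_signFlip_apply (A := A) m (i, j) (k, l)
  rw [hA m] at this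
  linear_combination -this

def permOrth (σ : Equiv.Perm (Fin d)) : orthogonalGroup (Fin d) ℝ :=
  ⟨σ.permMatrix ℝ, permMatrix_mem_orthogonalGroup σ⟩

lemma embedC_permOrth (σ : Equiv.Perm (Fin d)) : embedC (permOrth σ) = σ.permMatrix ℂ :=
  PEquiv.map_toMatrix Complex.ofRealHom _

lemma kronConj_permOrth_apply (σ : Equiv.Perm (Fin d)) (p q : Fin d × Fin d) :
    kronConj (permOrth σ) A p q = A (σ p.1, σ p.2) (σ q.1, σ q.2) := by
  simp [kronConj, embedC_permOrth, kronecker_permMatrix, PEquiv.toMatrix_toPEquiv_mul,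
    PEquiv.mul_toMatrix_toPEquiv]
  rfl

lemma apply_perm_eq (hA : ∀ O, kronConj O A = A) (σ : Equiv.Perm (Fin d)) (i j k l : Fin d) :
    A (σ i, σ j) (σ k, σ l) = A (i, j) (k, l) := by
  simpa [hA] using (kronConj_permOrth_apply (A := A) σ (i, j) (k, l)).symm

/-- The Householder reflection in `e i0 + 2 • e i1`. Its row `i0` is `(3/5, -4/5)`: a rational
orthogonal matrix that genuinely mixes the two coordinates. -/
noncomputable def twoPlaneReflection {i0 i1 : Fin d} (hne : i0 ≠ i1) :
    orthogonalGroup (Fin d) ℝ :=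
  ⟨1 - (2 / 5 : ℝ) •
      vecMulVec (Pi.single i0 1 + Pi.single i1 2) (Pi.single i0 1 + Pi.single i1 2),
    one_sub_smul_vecMulVec_mem_orthogonalGroup (by simp [hne, hne.symm]; norm_num)⟩

lemma twoPlaneReflection_apply {i0 i1 : Fin d} (hne : i0 ≠ i1) (y : Fin d) :
    ((twoPlaneReflection hne : Matrix (Fin d) (Fin d) ℝ) i0 y : ℂ) =
      (Pi.single i0 (3 / 5) + Pi.single i1 (-4 / 5) : Fin d → ℂ) y := by
  simp only [twoPlaneReflection, Matrix.sub_apply, Matrix.smul_apply, vecMulVec_apply, one_apply,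
    Pi.add_apply, Pi.single_apply, smul_eq_mul]
  obtain rfl | h0 := eq_or_ne y i0
  · simp [hne]; norm_num
  obtain rfl | h1 := eq_or_ne y i1
  · simp [hne, h0]; norm_num
  · simp [h0, h1, h0.symm]

lemma apply_self_self_eq (hA : ∀ O, kronConj O A = A) {i0 i1 : Fin d} (hne : i0 ≠ i1) :
    A (i0, i0) (i0, i0) = A (i0, i1) (i0, i1) + A (i0, i1) (i1, i0) + A (i0, i0) (i1, i1) := by
  have hz {i j k l : Fin d} (h : ¬((i = k ∧ j = l) ∨ (i = l ∧ j = k) ∨ (i = j ∧ k = l))) :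
      A (i, j) (k, l) = 0 :=
    apply_eq_zero_of_kronConj_signFlip (fun m => hA _) h
  have hswap (i j k l : Fin d) := apply_perm_eq hA (Equiv.swap i0 i1) i j k l
  have h := congr_fun₂ (hA (twoPlaneReflection hne)) (i0, i0) (i0, i0)
  rw [kronConj_apply] at h
  simp only [twoPlaneReflection_apply, Fintype.sum_prod_type, Pi.add_apply, add_mul, mul_add,
    Finset.sum_add_distrib, Pi.single_apply, ite_mul, mul_ite, zero_mul, mul_zero,
    Finset.sum_ite_eq', Finset.mem_univ, if_true] at h
  simp (disch := simp [hne, hne.symm]) only [hz] at h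
  have e1 := hswap i0 i0 i0 i0
  have e2 := hswap i0 i1 i0 i1
  have e3 := hswap i0 i1 i1 i0
  have e4 := hswap i0 i0 i1 i1
  simp only [Equiv.swap_apply_left, Equiv.swap_apply_right] at e1 e2 e3 e4
  -- With `e1`–`e4`, `h` reads `t = (337 t + 288 (a + b + c)) / 625` for `t = A (i0,i0) (i0,i0)`.
  linear_combination (-625 / 288) * h + (8 / 9) * e1 + (1 / 2) * (e2 + e3 + e4)

theorem exists_eq_smul_one_add_smul_swapMat_add_smul_eMat (hA : ∀ O, kronConj O A = A) :
    ∃ α β γ : ℂ, A = α • 1 + β • swapMat d + γ • eMat d := by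
  rcases subsingleton_or_nontrivial (Fin d) with hd | hd
  · refine ⟨A.trace, 0, 0, ?_⟩
    ext p q
    obtain rfl := Subsingleton.elim p q
    simp [trace, Fintype.sum_subsingleton _ p]
  obtain ⟨i0, i1, hne⟩ := exists_pair_ne (Fin d)
  set a := A (i0, i1) (i0, i1)
  set b := A (i0, i1) (i1, i0)
  set c := A (i0, i0) (i1, i1)
  have hoff {i j : Fin d} (hij : i ≠ j) :
      A (i, j) (i, j) = a ∧ A (i, j) (j, i) = b ∧ A (i, i) (j, j) = c := by
    obtain ⟨σ, rfl, rfl⟩ := Equiv.Perm.exists_apply_eq_and_apply_eq hne hij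
    exact ⟨apply_perm_eq hA σ _ _ _ _, apply_perm_eq hA σ _ _ _ _, apply_perm_eq hA σ _ _ _ _⟩
  have hdiag (i : Fin d) : A (i, i) (i, i) = a + b + c := by
    rw [← apply_self_self_eq hA hne]
    simpa using apply_perm_eq hA (Equiv.swap i0 i) i0 i0 i0 i0
  refine ⟨a, b, c, ?_⟩
  ext ⟨i, j⟩ ⟨k, l⟩
  simp only [Matrix.add_apply, Matrix.smul_apply, one_apply, swapMat, eMat, of_apply,
    Prod.mk.injEq, smul_eq_mul, mul_ite, mul_one, mul_zero]
  by_cases hpat : (i = k ∧ j = l) ∨ (i = l ∧ j = k) ∨ (i = j ∧ k = l)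
  · rcases hpat with ⟨rfl, rfl⟩ | ⟨rfl, rfl⟩ | ⟨rfl, rfl⟩
    · obtain rfl | hij := eq_or_ne i j
      · simp [hdiag]
      · simp [(hoff hij).1, hij]
    · obtain rfl | hij := eq_or_ne i j
      · simp [hdiag]
      · simp [(hoff hij).2.1, hij]
    · obtain rfl | hik := eq_or_ne i k
      · simp [hdiag]
      · simp [(hoff hik).2.2, hik]
  · rw [apply_eq_zero_of_kronConj_signFlip (fun m => hA _) hpat]
    simp only [not_or] at hpat
    simp [hpat]

end Commutant

theorem stmt_2_general (d : ℕ)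
    [MeasurableSpace (Matrix.orthogonalGroup (Fin d) ℝ)]
    [BorelSpace (Matrix.orthogonalGroup (Fin d) ℝ)]
    (μ : Measure (Matrix.orthogonalGroup (Fin d) ℝ))
    [μ.IsHaarMeasure]
    (M : Matrix (Fin d × Fin d) (Fin d × Fin d) ℂ) :
    ∃ α β γ : ℂ,
      (∫ O : Matrix.orthogonalGroup (Fin d) ℝ,
          (embedC O ⊗ₖ embedC O) * M * (embedC O ⊗ₖ embedC O)ᵀ ∂μ)
        = α • (1 : Matrix (Fin d × Fin d) (Fin d × Fin d) ℂ)
            + β • swapMat d + γ • eMat d :=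
  exists_eq_smul_one_add_smul_swapMat_add_smul_eMat (kronConj_integral μ M)

/-- the Haar twirl `∫ (O ⊗ O) M (O ⊗ O)ᵀ dμ(O)` over the orthogonal group
`O(d)` is a linear combination `α·1 + β·S + γ·E`. -/
theorem stmt_2 (d : ℕ) (hd : 1 ≤ d)
    [MeasurableSpace (Matrix.orthogonalGroup (Fin d) ℝ)]
    [BorelSpace (Matrix.orthogonalGroup (Fin d) ℝ)]
    (μ : Measure (Matrix.orthogonalGroup (Fin d) ℝ))
    [μ.IsHaarMeasure] [IsProbabilityMeasure μ]
    (M : Matrix (Fin d × Fin d) (Fin d × Fin d) ℂ) :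
    ∃ α β γ : ℂ,
      (∫ O : Matrix.orthogonalGroup (Fin d) ℝ,
          (embedC O ⊗ₖ embedC O) * M * (embedC O ⊗ₖ embedC O)ᵀ ∂μ)
        = α • (1 : Matrix (Fin d × Fin d) (Fin d × Fin d) ℂ)
            + β • swapMat d + γ • eMat d :=
  stmt_2_general d μ M
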